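/- Let X be a set, let d1 be a metric on X (i.e. a pseudometric with d1(x,y) = 0 implying x = y), and let d2 be a pseudometric on X. Let C > 0 and assume that for every x ∈ X there exists ε_x > 0 such that for all y ∈ X, if d1(x,y) < ε_x then d1(x,y) ≤ C·d2(x,y). Let d̂2 denote the intrinsic pseudometric induced by d2, where the admissible paths are the maps [0,1] → X continuous with respect to d1. Then d̂2(x,y) ≥ (1/C)·d1(x,y) for all x,y ∈ X; in particular, if x ≠ y then d̂2(x,y) > 0, i.e. d̂2 separates points even when d2 does not. -/

import Mathlib

open unitInterval ENNReal Topology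

/-- A pseudometric on a set `X`. -/
structure PseudoMetricOn (X : Type*) where
  d : X → X → ℝ
  refl : ∀ x, d x x = 0
  symm : ∀ x y, d x y = d y x
  nonneg : ∀ x y, 0 ≤ d x y
  triangle : ∀ x y z, d x z ≤ d x y + d y z

/-- A partition `0 = t₀ ≤ t₁ ≤ ... ≤ tₙ = 1` of `[0,1]`. -/
structure PathPartition where
  n : ℕ
  t : Fin (n + 1) → I
  mono : Monotone t
  first : t 0 = 0
  last : t (Fin.last n) = 1

/-- The sum `∑ d(γ(tᵢ), γ(tᵢ₊₁))` associated to a partition. -/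
noncomputable def pathSum {X : Type*} (d : PseudoMetricOn X) (γ : I → X)
    (P : PathPartition) : ℝ :=
  ∑ i : Fin P.n, d.d (γ (P.t i.castSucc)) (γ (P.t i.succ))

/-- The length of `γ` induced by the pseudometric `d`. -/
noncomputable def pathLength {X : Type*} (d : PseudoMetricOn X) (γ : I → X) : ℝ≥0∞ :=
  ⨆ P : PathPartition, ENNReal.ofReal (pathSum d γ P)

/-- The topology on `X` induced by a pseudometric. -/
noncomputable def pmTopology {X : Type*} (d : PseudoMetricOn X) : TopologicalSpace X :=
  (UniformSpace.ofDist d.d d.refl d.symm d.triangle).toTopologicalSpace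

/-- `γ : [0,1] → X` is continuous w.r.t. the pseudometric `ρ`. -/
def IsAdmissible {X : Type*} (ρ : PseudoMetricOn X) (γ : I → X) : Prop :=
  Continuous[inferInstance, pmTopology ρ] γ

/-- The intrinsic pseudometric induced by `d`, with admissible paths the `ρ`-continuous ones. -/
noncomputable def intrinsicDist {X : Type*} (d ρ : PseudoMetricOn X) (x y : X) : ℝ≥0∞ :=
  ⨅ (γ : I → X) (_ : IsAdmissible ρ γ ∧ γ 0 = x ∧ γ 1 = y), pathLength d γ

lemma isOpen_pmBall {X : Type*} (d : PseudoMetricOn X) (c : X) (ε : ℝ) :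
    IsOpen[pmTopology d] {z | d.d c z < ε} := by
  letI P : PseudoMetricSpace X :=
    { dist := d.d, dist_self := d.refl, dist_comm := d.symm, dist_triangle := d.triangle }
  have h : pmTopology d = P.toUniformSpace.toTopologicalSpace := rfl
  rw [h]
  have h2 : {z | d.d c z < ε} = Metric.ball c ε := by
    ext z
    show d.d c z < ε ↔ dist z c < ε
    rw [show dist z c = d.d z c from rfl, d.symm]
  rw [h2]
  exact Metric.isOpen_ball

/-- Pointwise continuity estimate for an admissible path. -/
lemma admissible_cont {X : Type*} (d : PseudoMetricOn X) (γ : I → X)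
    (hγ : IsAdmissible d γ) (t : I) (ε : ℝ) (hε : 0 < ε) :
    ∃ δ > (0 : ℝ), ∀ s : I, |(s : ℝ) - (t : ℝ)| < δ → d.d (γ t) (γ s) < ε := by
  have hopen : IsOpen (γ ⁻¹' {z | d.d (γ t) z < ε}) :=
    @Continuous.isOpen_preimage _ _ _ (pmTopology d) γ hγ _ (isOpen_pmBall d (γ t) ε)
  have ht : t ∈ γ ⁻¹' {z | d.d (γ t) z < ε} := by
    simp only [Set.mem_preimage, Set.mem_setOf_eq, d.refl]; exact hε
  obtain ⟨δ, hδ, hball⟩ := Metric.isOpen_iff.1 hopen t ht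
  refine ⟨δ, hδ, fun s hs => ?_⟩
  have : s ∈ Metric.ball t δ := by
    rw [Metric.mem_ball, Subtype.dist_eq, Real.dist_eq]; exact hs
  exact hball this

/-- Generalized triangle inequality along a chain. -/
lemma chain_triangle {X : Type*} (d : PseudoMetricOn X) :
    ∀ (n : ℕ) (f : Fin (n + 1) → X),
      d.d (f 0) (f (Fin.last n)) ≤ ∑ i : Fin n, d.d (f i.castSucc) (f i.succ) := by
  intro n
  induction n with
  | zero => intro f; simp [d.refl]
  | succ n ih =>
    intro f
    have h1 := ih (f ∘ Fin.castSucc)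
    have h2 := d.triangle (f 0) (f (Fin.last n).castSucc) (f (Fin.last (n + 1)))
    rw [Fin.sum_univ_castSucc (f := fun i : Fin (n + 1) => d.d (f i.castSucc) (f i.succ))]
    simp only [Function.comp_apply] at h1
    have e0 : ((0 : Fin (n + 1)).castSucc : Fin (n + 2)) = 0 := rfl
    have elast : ((Fin.last n).succ : Fin (n + 2)) = Fin.last (n + 1) := Fin.succ_last n
    have h1' : d.d (f 0) (f (Fin.last n).castSucc) ≤
        ∑ i : Fin n, d.d (f (i.castSucc).castSucc) (f (i.succ).castSucc) := h1
    calc d.d (f 0) (f (Fin.last (n + 1)))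
        ≤ d.d (f 0) (f (Fin.last n).castSucc) + d.d (f (Fin.last n).castSucc) (f (Fin.last (n+1))) := h2
      _ ≤ (∑ i : Fin n, d.d (f (i.castSucc).castSucc) (f (i.succ).castSucc))
            + d.d (f (Fin.last n).castSucc) (f (Fin.last (n+1))) := add_le_add h1' le_rfl
      _ = (∑ i : Fin n, d.d (f (i.castSucc).castSucc) (f (i.castSucc).succ))
            + d.d (f (Fin.last n).castSucc) (f ((Fin.last n).succ)) := by
          rw [elast]
          congr 1

/-- Key lemma: the length of any `d1`-admissible path bounds `(1/C) d1(endpoints)`. -/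
lemma key_length_bound {X : Type*} (d1 d2 : PseudoMetricOn X) (C : ℝ) (hC : 0 < C)
    (hdisc : ∀ x : X, ∃ ε > (0 : ℝ), ∀ y : X, d1.d x y < ε → d1.d x y ≤ C * d2.d x y)
    (γ : I → X) (hγ : IsAdmissible d1 γ) :
    ENNReal.ofReal ((1 / C) * d1.d (γ 0) (γ 1)) ≤ pathLength d2 γ := by
  classical
  -- Good pairs
  set Good : I → I → Prop := fun a b => d1.d (γ a) (γ b) ≤ C * d2.d (γ a) (γ b) with hGood
  -- set of reachable times
  set T : Set I := {t | ∃ (n : ℕ) (c : Fin (n + 1) → I), Monotone c ∧ c 0 = 0 ∧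
      c (Fin.last n) = t ∧ ∀ i : Fin n, Good (c i.castSucc) (c i.succ)} with hT
  have h0T : (0 : I) ∈ T := ⟨0, fun _ => 0, monotone_const, rfl, rfl, fun i => i.elim0⟩
  -- extension: appending a good step
  have hext : ∀ t ∈ T, ∀ s : I, t ≤ s → Good t s → s ∈ T := by
    rintro t ⟨n, c, hmono, hfirst, hlast, hgood⟩ s hts hGts
    refine ⟨n + 1, Fin.snoc c s, ?_, ?_, ?_, ?_⟩
    · rw [Fin.monotone_iff_le_succ]
      intro i
      rcases Fin.eq_castSucc_or_eq_last i with ⟨j, rfl⟩ | rfl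
      · rw [Fin.succ_castSucc, Fin.snoc_castSucc, Fin.snoc_castSucc]
        exact hmono (Fin.castSucc_le_succ j)
      · rw [Fin.succ_last, Fin.snoc_last, Fin.snoc_castSucc, hlast]
        exact hts
    · rw [show ((0 : Fin (n + 2))) = ((0 : Fin (n+1)).castSucc) from rfl, Fin.snoc_castSucc]
      exact hfirst
    · rw [Fin.snoc_last]
    · intro i
      rcases Fin.eq_castSucc_or_eq_last i with ⟨j, rfl⟩ | rfl
      · rw [Fin.succ_castSucc, Fin.snoc_castSucc, Fin.snoc_castSucc]
        exact hgood j
      · rw [Fin.succ_last, Fin.snoc_last, Fin.snoc_castSucc, hlast]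
        exact hGts
  -- the sup
  set Tr : Set ℝ := Subtype.val '' T with hTr
  have hTrne : Tr.Nonempty := ⟨0, 0, h0T, rfl⟩
  have hTrbdd : BddAbove Tr := ⟨1, by rintro r ⟨u, _, rfl⟩; exact u.2.2⟩
  set τ : ℝ := sSup Tr with hτdef
  have hτ0 : (0 : ℝ) ≤ τ := le_csSup hTrbdd ⟨0, h0T, rfl⟩
  have hτ1 : τ ≤ 1 := csSup_le hTrne (by rintro r ⟨u, _, rfl⟩; exact u.2.2)
  set τI : I := ⟨τ, hτ0, hτ1⟩ with hτI
  obtain ⟨ε, hε, hεgood⟩ := hdisc (γ τI)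
  obtain ⟨δ, hδ, hδball⟩ := admissible_cont d1 γ hγ τI ε hε
  -- τI ∈ T
  have hτT : τI ∈ T := by
    obtain ⟨r, ⟨u, huT, hur⟩, hr⟩ := exists_lt_of_lt_csSup hTrne
      (show τ - δ < τ by linarith)
    have hu_le : (u : ℝ) ≤ τ := le_csSup hTrbdd ⟨u, huT, rfl⟩
    have hru : τ - δ < (u : ℝ) := by rw [hur]; exact hr
    have hclose : |(u : ℝ) - τ| < δ :=
      abs_sub_lt_iff.2 ⟨by linarith, by linarith⟩
    have h1 : d1.d (γ τI) (γ u) < ε := hδball u hclose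
    have hg : Good u τI := by
      rw [hGood]; dsimp only
      rw [d1.symm, d2.symm]
      exact hεgood _ h1
    exact hext u huT τI hu_le hg
  -- τ = 1
  have hτeq : τ = 1 := by
    by_contra hne
    have hτlt : τ < 1 := lt_of_le_of_ne hτ1 hne
    set s : ℝ := min (τ + δ / 2) 1 with hs
    have hs0 : 0 ≤ s := le_min (by linarith) zero_le_one
    have hs1 : s ≤ 1 := min_le_right _ _
    set sI : I := ⟨s, hs0, hs1⟩ with hsI
    have hτs : τ ≤ s := le_min (by linarith) (le_of_lt hτlt)
    have hclose : |(s : ℝ) - τ| < δ := by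
      rw [abs_sub_lt_iff]
      constructor
      · have : s ≤ τ + δ / 2 := min_le_left _ _
        linarith
      · linarith
    have h1 : d1.d (γ τI) (γ sI) < ε := hδball sI hclose
    have hg : Good τI sI := hεgood _ h1
    have hsT : sI ∈ T := hext τI hτT sI hτs hg
    have : s ≤ τ := le_csSup hTrbdd ⟨sI, hsT, rfl⟩
    have hτlts : τ < s := lt_min (by linarith) hτlt
    linarith
  -- final partition
  have h1T : (1 : I) ∈ T := by
    have : τI = (1 : I) := by ext; exact hτeq
    rwa [this] at hτT
  obtain ⟨n, c, hmono, hfirst, hlast, hgood⟩ := h1T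
  set P : PathPartition := ⟨n, c, hmono, hfirst, hlast⟩ with hP
  have hsum : (1 / C) * d1.d (γ 0) (γ 1) ≤ pathSum d2 γ P := by
    have h1 : d1.d (γ (c 0)) (γ (c (Fin.last n))) ≤
        ∑ i : Fin n, d1.d (γ (c i.castSucc)) (γ (c i.succ)) :=
      chain_triangle d1 n (fun i => γ (c i))
    have h2 : ∑ i : Fin n, d1.d (γ (c i.castSucc)) (γ (c i.succ)) ≤
        ∑ i : Fin n, C * d2.d (γ (c i.castSucc)) (γ (c i.succ)) :=
      Finset.sum_le_sum fun i _ => hgood i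
    rw [hfirst, hlast] at h1
    have h3 : d1.d (γ 0) (γ 1) ≤ C * pathSum d2 γ P := by
      rw [pathSum, ← Finset.mul_sum] at *
      exact h1.trans h2
    rw [div_mul_eq_mul_div, one_mul, div_le_iff₀' hC]
    exact h3
  calc ENNReal.ofReal ((1 / C) * d1.d (γ 0) (γ 1))
      ≤ ENNReal.ofReal (pathSum d2 γ P) := ENNReal.ofReal_le_ofReal hsum
    _ ≤ pathLength d2 γ := le_iSup (fun Q : PathPartition => ENNReal.ofReal (pathSum d2 γ Q)) P

/-- if `d1` is a true metric and `d1 ≤ C·d2` locally around each point, then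
the intrinsic pseudometric `d̂2` induced by `d2` (with `d1`-continuous admissible paths)
satisfies `d̂2(x,y) ≥ (1/C)·d1(x,y)`; in particular it separates points. -/
theorem intrinsicDist_separates {X : Type*} (d1 d2 : PseudoMetricOn X)
    (hsep : ∀ x y, d1.d x y = 0 → x = y) (C : ℝ) (hC : 0 < C)
    (hdisc : ∀ x : X, ∃ ε > (0 : ℝ), ∀ y : X, d1.d x y < ε → d1.d x y ≤ C * d2.d x y) :
    ∀ x y : X, ENNReal.ofReal ((1 / C) * d1.d x y) ≤ intrinsicDist d2 d1 x y ∧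
      (x ≠ y → 0 < intrinsicDist d2 d1 x y) := by
  intro x y
  have hmain : ENNReal.ofReal ((1 / C) * d1.d x y) ≤ intrinsicDist d2 d1 x y := by
    rw [intrinsicDist]
    refine le_iInf fun γ => le_iInf fun ⟨hadm, h0, h1⟩ => ?_
    have := key_length_bound d1 d2 C hC hdisc γ hadm
    rwa [h0, h1] at this
  refine ⟨hmain, fun hxy => ?_⟩
  have hd1 : 0 < d1.d x y := by
    rcases lt_or_eq_of_le (d1.nonneg x y) with h | h
    · exact h
    · exact absurd (hsep x y h.symm) hxy
  have hpos : 0 < ENNReal.ofReal ((1 / C) * d1.d x y) := by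
    rw [ENNReal.ofReal_pos]
    positivity
  exact hpos.trans_le hmain
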